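/- Information-projection identity: Let μ be a joint distribution of discrete (X,Y), η : 𝒳 → 𝒰, U = η(X), and let 𝒫_η be the set of joint distributions μ̃ on 𝒳 × 𝒴 under which X and Y are conditionally independent given η(X). Then min over μ̃ ∈ 𝒫_η of D(μ ‖ μ̃) equals I(X;Y|U), and the minimum is attained by μ̃*(x,y) = μ_X(x) · μ_{Y|U}(y|η(x)). -/

import Mathlib

/-!
Write `μ*` for `μ_X(x) · μ_{Y|U}(y | η x)`. It has the same marginals as `μ` on `X` and on
`(η X, Y)`, and every conditionally independent `ν` is its own such projection. Hence, when
`μ ≪ ν`, `log (μ* / ν)` splits as `a x + b (η x) y`, whose integrals against `μ` and `μ*`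
coincide; this yields the Pythagorean identity `D(μ‖ν) = D(μ‖μ*) + D(μ*‖ν)`, and Gibbs'
inequality `D(μ*‖ν) ≥ 0` finishes. That `D(μ‖μ*) = I(X;Y|U)` is a rewriting of the logarithm.
-/

open Finset

noncomputable section

/-- Marginal distribution of the first coordinate of a joint distribution. -/
def margX {X Y : Type*} [Fintype Y] (μ : X → Y → ℝ) (x : X) : ℝ := ∑ y, μ x y

/-- Marginal distribution of the second coordinate. -/
def margY {X Y : Type*} [Fintype X] (μ : X → Y → ℝ) (y : Y) : ℝ := ∑ x, μ x y

/-- Distribution of `U = η X`. -/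
def margU {X Y U : Type*} [Fintype X] [Fintype Y] [DecidableEq U]
    (μ : X → Y → ℝ) (η : X → U) (u : U) : ℝ :=
  ∑ x, if η x = u then margX μ x else 0

/-- Joint probability `P(Y = y, η X = u)`. -/
def margYU {X Y U : Type*} [Fintype X] [DecidableEq U]
    (μ : X → Y → ℝ) (η : X → U) (y : Y) (u : U) : ℝ :=
  ∑ x, if η x = u then μ x y else 0

/-- Joint distribution of the pair `(η X, Y)`. -/
def jointUY {X Y U : Type*} [Fintype X] [DecidableEq U]
    (μ : X → Y → ℝ) (η : X → U) : U → Y → ℝ :=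
  fun u y => margYU μ η y u

/-- Shannon mutual information `I(X;Y)` of a joint distribution (natural log). -/
def MI {X Y : Type*} [Fintype X] [Fintype Y] (μ : X → Y → ℝ) : ℝ :=
  ∑ x, ∑ y, μ x y * Real.log (μ x y / (margX μ x * margY μ y))

/-- Conditional Shannon entropy `H(Y|X)`. -/
def condEnt {X Y : Type*} [Fintype X] [Fintype Y] (μ : X → Y → ℝ) : ℝ :=
  -∑ x, ∑ y, μ x y * Real.log (μ x y / margX μ x)

/-- Conditional mutual information `I(X;Y|U)` where `U = η X` is a deterministic
function of `X`. -/
def condMI {X Y U : Type*} [Fintype X] [Fintype Y] [DecidableEq U]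
    (μ : X → Y → ℝ) (η : X → U) : ℝ :=
  ∑ x, ∑ y, μ x y *
    Real.log (μ x y * margU μ η (η x) / (margX μ x * margYU μ η y (η x)))

/-- `μ` is a probability distribution on `X × Y`. -/
def IsDist {X Y : Type*} [Fintype X] [Fintype Y] (μ : X → Y → ℝ) : Prop :=
  (∀ x y, 0 ≤ μ x y) ∧ ∑ x, ∑ y, μ x y = 1

/-- `X` and `Y` are conditionally independent given `U = η X`: for every `u` with
`P(U = u) > 0`, `P(X = x, Y = y | U = u) = P(X = x | U = u) · P(Y = y | U = u)`
(stated multiplied through by `P(U = u)²`). -/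
def CondIndep {X Y U : Type*} [Fintype X] [Fintype Y] [DecidableEq U]
    (μ : X → Y → ℝ) (η : X → U) : Prop :=
  ∀ u, 0 < margU μ η u → ∀ x y,
    (if η x = u then μ x y else 0) * margU μ η u =
      (if η x = u then margX μ x else 0) * margYU μ η y u

/-- Cross-entropy risk `E_{(X,Y)∼μ}[− log v(Y|X)]` of a predictive conditional
distribution `v`. -/
def risk {X Y : Type*} [Fintype X] [Fintype Y] (μ : X → Y → ℝ) (v : X → Y → ℝ) : ℝ :=
  ∑ x, ∑ y, μ x y * (-Real.log (v x y))

/-- Kullback–Leibler divergence between two joint distributions on `X × Y`. -/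
def KL {X Y : Type*} [Fintype X] [Fintype Y] (μ ν : X → Y → ℝ) : ℝ :=
  ∑ x, ∑ y, μ x y * Real.log (μ x y / ν x y)

/-- Averaged conditional KL divergence `D(μ_{Y|X} ‖ v | μ_X)`. -/
def avgKL {X Y : Type*} [Fintype X] [Fintype Y] (μ : X → Y → ℝ) (v : X → Y → ℝ) : ℝ :=
  ∑ x, margX μ x * ∑ y,
    (μ x y / margX μ x) * Real.log ((μ x y / margX μ x) / v x y)

/-- Averaged conditional KL divergence in the latent domain:
`D(μ_{Y|U} ‖ v | μ_U)` for the encoder `η`. -/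
def decKL {X Y U : Type*} [Fintype X] [Fintype Y] [Fintype U] [DecidableEq U]
    (μ : X → Y → ℝ) (η : X → U) (v : U → Y → ℝ) : ℝ :=
  ∑ u, margU μ η u * ∑ y,
    (margYU μ η y u / margU μ η u) *
      Real.log ((margYU μ η y u / margU μ η u) / v u y)

open Real

lemma sub_le_mul_log_div {p q : ℝ} (hp : 0 ≤ p) (hq : 0 ≤ q) (hpq : p ≠ 0 → 0 < q) :
    p - q ≤ p * log (p / q) := by
  rcases hp.eq_or_lt with rfl | hp
  · simpa using hq
  have h := one_sub_inv_le_log_of_pos (div_pos hp (hpq hp.ne'))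
  rw [inv_div] at h
  calc p - q = p * (1 - q / p) := by field_simp
    _ ≤ p * log (p / q) := mul_le_mul_of_nonneg_left h hp.le

lemma Fintype.sum_eq_zero_of_sum_eq_zero {ι : Type*} [Fintype ι] {f g : ι → ℝ}
    (hg : ∀ i, 0 ≤ g i) (hfg : ∀ i, g i = 0 → f i = 0)
    (h : ∑ i, g i = 0) : ∑ i, f i = 0 := by
  rw [Fintype.sum_eq_zero_iff_of_nonneg hg] at h
  exact Finset.sum_eq_zero fun i _ => hfg i (congrFun h i)

section Marginals

variable {X Y U : Type*} [DecidableEq U] {μ ν : X → Y → ℝ} {η : X → U}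

lemma margX_nonneg [Fintype Y] (hμ : ∀ x y, 0 ≤ μ x y) (x : X) : 0 ≤ margX μ x :=
  Finset.sum_nonneg fun y _ => hμ x y

lemma margYU_nonneg [Fintype X] (hμ : ∀ x y, 0 ≤ μ x y) (y : Y) (u : U) :
    0 ≤ margYU μ η y u :=
  Finset.sum_nonneg fun x _ => by split_ifs <;> simp [hμ x y]

variable [Fintype X] [Fintype Y]

lemma margU_nonneg (hμ : ∀ x y, 0 ≤ μ x y) (u : U) : 0 ≤ margU μ η u :=
  Finset.sum_nonneg fun x _ => by split_ifs <;> simp [margX_nonneg hμ x]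

lemma sum_margYU (μ : X → Y → ℝ) (η : X → U) (u : U) :
    ∑ y, margYU μ η y u = margU μ η u := by
  unfold margYU margU margX
  rw [Finset.sum_comm]
  exact Finset.sum_congr rfl fun x _ => by split_ifs <;> simp

lemma margYU_le_margU (hμ : ∀ x y, 0 ≤ μ x y) (y : Y) (u : U) :
    margYU μ η y u ≤ margU μ η u := by
  rw [← sum_margYU]
  exact Finset.single_le_sum (fun y _ => margYU_nonneg hμ y u) (Finset.mem_univ y)

lemma margX_le_margU (hμ : ∀ x y, 0 ≤ μ x y) (x : X) : margX μ x ≤ margU μ η (η x) := by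
  unfold margU
  simpa using Finset.single_le_sum (f := fun x' => if η x' = η x then margX μ x' else 0)
    (fun x' _ => by split_ifs <;> simp [margX_nonneg hμ x']) (Finset.mem_univ x)

omit [Fintype X] in
lemma eq_zero_of_margX_eq_zero (hμ : ∀ x y, 0 ≤ μ x y) {x : X} (y : Y)
    (h : margX μ x = 0) : μ x y = 0 :=
  (Fintype.sum_eq_zero_iff_of_nonneg (hμ x)).1 h ▸ rfl

omit [Fintype Y] in
lemma eq_zero_of_margYU_eq_zero (hμ : ∀ x y, 0 ≤ μ x y) {x : X} {y : Y}
    (h : margYU μ η y (η x) = 0) : μ x y = 0 := by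
  have := congrFun ((Fintype.sum_eq_zero_iff_of_nonneg fun x' => ?_).1 h) x
  · simpa using this
  · split_ifs <;> simp [hμ x' y]

lemma margX_eq_zero_of_margU_eq_zero (hμ : ∀ x y, 0 ≤ μ x y) {x : X}
    (h : margU μ η (η x) = 0) : margX μ x = 0 :=
  le_antisymm (h ▸ margX_le_margU hμ x) (margX_nonneg hμ x)

omit [Fintype X] in
lemma margX_eq_zero_of_absCont (hν : ∀ x y, 0 ≤ ν x y) (hac : ∀ x y, ν x y = 0 → μ x y = 0)
    {x : X} (h : margX ν x = 0) : margX μ x = 0 :=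
  Fintype.sum_eq_zero_of_sum_eq_zero (hν x) (hac x) h

omit [Fintype Y] in
lemma margYU_eq_zero_of_absCont (hν : ∀ x y, 0 ≤ ν x y)
    (hac : ∀ x y, ν x y = 0 → μ x y = 0) {y : Y} {u : U} (h : margYU ν η y u = 0) :
    margYU μ η y u = 0 := by
  refine Fintype.sum_eq_zero_of_sum_eq_zero (fun x => ?_) (fun x => ?_) h <;> split_ifs
  exacts [hν x y, le_rfl, hac x y, fun _ => rfl]

lemma margU_eq_zero_of_absCont (hν : ∀ x y, 0 ≤ ν x y) (hac : ∀ x y, ν x y = 0 → μ x y = 0)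
    {u : U} (h : margU ν η u = 0) : margU μ η u = 0 := by
  refine Fintype.sum_eq_zero_of_sum_eq_zero (fun x => ?_) (fun x => ?_) h <;> split_ifs
  exacts [margX_nonneg hν x, le_rfl, margX_eq_zero_of_absCont hν hac, fun _ => rfl]

end Marginals

section Projection

variable {X Y U : Type*} [Fintype X] [Fintype Y] [DecidableEq U]

def condIndepProj (μ : X → Y → ℝ) (η : X → U) : X → Y → ℝ :=
  fun x y => margX μ x * (margYU μ η y (η x) / margU μ η (η x))

variable {μ ν : X → Y → ℝ} {η : X → U}

lemma condIndepProj_nonneg (hμ : ∀ x y, 0 ≤ μ x y) (x : X) (y : Y) :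
    0 ≤ condIndepProj μ η x y :=
  mul_nonneg (margX_nonneg hμ x) (div_nonneg (margYU_nonneg hμ y _) (margU_nonneg hμ _))

lemma margX_condIndepProj (hμ : ∀ x y, 0 ≤ μ x y) (x : X) :
    margX (condIndepProj μ η) x = margX μ x := by
  simp only [margX, condIndepProj, ← Finset.mul_sum, ← Finset.sum_div]
  rw [← margX, sum_margYU]
  rcases (margU_nonneg hμ (η x)).eq_or_lt with h | h
  · rw [margX_eq_zero_of_margU_eq_zero hμ h.symm, zero_mul]
  · rw [div_self h.ne', mul_one]

lemma margU_condIndepProj (hμ : ∀ x y, 0 ≤ μ x y) (u : U) :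
    margU (condIndepProj μ η) η u = margU μ η u := by
  simp only [margU, margX_condIndepProj hμ]

lemma margYU_condIndepProj (hμ : ∀ x y, 0 ≤ μ x y) (y : Y) (u : U) :
    margYU (condIndepProj μ η) η y u = margYU μ η y u := by
  have h : ∀ x, (if η x = u then condIndepProj μ η x y else 0) =
      (if η x = u then margX μ x else 0) * (margYU μ η y u / margU μ η u) := by
    intro x
    split_ifs with hx
    · rw [condIndepProj, hx]
    · rw [zero_mul]
  rw [margYU, Finset.sum_congr rfl fun x _ => h x, ← Finset.sum_mul, ← margU]
  rcases (margU_nonneg hμ u).eq_or_lt with hu | hu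
  · rw [← hu, zero_mul]
    exact (le_antisymm (hu ▸ margYU_le_margU hμ y u) (margYU_nonneg hμ y u)).symm
  · rw [mul_div_cancel₀ _ hu.ne']

lemma isDist_condIndepProj (hμ : IsDist μ) : IsDist (condIndepProj μ η) := by
  refine ⟨condIndepProj_nonneg hμ.1, ?_⟩
  change ∑ x, margX (condIndepProj μ η) x = 1
  simp only [margX_condIndepProj hμ.1]
  exact hμ.2

lemma condIndep_condIndepProj (hμ : ∀ x y, 0 ≤ μ x y) : CondIndep (condIndepProj μ η) η := by
  intro u hu x y
  rw [margU_condIndepProj hμ] at hu ⊢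
  split_ifs with hx
  · rw [margX_condIndepProj hμ, margYU_condIndepProj hμ, condIndepProj, hx]
    field_simp
  · rw [zero_mul, zero_mul]

lemma CondIndep.condIndepProj_eq (hν : ∀ x y, 0 ≤ ν x y) (hci : CondIndep ν η) :
    condIndepProj ν η = ν := by
  ext x y
  rcases (margU_nonneg hν (η x)).eq_or_lt with h | h
  · rw [condIndepProj, ← h, div_zero, mul_zero,
      eq_zero_of_margX_eq_zero hν y (margX_eq_zero_of_margU_eq_zero hν h.symm)]
  · have := hci (η x) h x y
    rw [if_pos rfl, if_pos rfl] at this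
    rw [condIndepProj, ← mul_div_assoc, ← this, mul_div_cancel_right₀ _ h.ne']

lemma eq_zero_of_condIndepProj_eq_zero (hμ : ∀ x y, 0 ≤ μ x y) {x : X} {y : Y}
    (h : condIndepProj μ η x y = 0) : μ x y = 0 := by
  rcases mul_eq_zero.1 h with h | h
  · exact eq_zero_of_margX_eq_zero hμ y h
  rcases div_eq_zero_iff.1 h with h | h
  · exact eq_zero_of_margYU_eq_zero hμ h
  · exact eq_zero_of_margX_eq_zero hμ y (margX_eq_zero_of_margU_eq_zero hμ h)

lemma condIndepProj_absCont (hν : ∀ x y, 0 ≤ ν x y)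
    (hac : ∀ x y, ν x y = 0 → μ x y = 0) (x : X) (y : Y)
    (h : condIndepProj ν η x y = 0) : condIndepProj μ η x y = 0 := by
  unfold condIndepProj at h ⊢
  simp only [mul_eq_zero, div_eq_zero_iff] at h ⊢
  exact h.imp (margX_eq_zero_of_absCont hν hac) <|
    Or.imp (margYU_eq_zero_of_absCont hν hac) (margU_eq_zero_of_absCont hν hac)

-- No positivity is needed: `a / (b * (c / d)) = a * d / (b * c)` holds even with `x / 0 = 0`.
lemma KL_condIndepProj (μ : X → Y → ℝ) (η : X → U) :
    KL μ (condIndepProj μ η) = condMI μ η := by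
  unfold KL condMI condIndepProj
  congr! 4 with x _ y _
  simp only [div_eq_mul_inv, mul_inv, inv_inv]
  ring

end Projection

section Divergence

variable {X Y U : Type*} [Fintype X] [Fintype Y] [DecidableEq U] {μ ν : X → Y → ℝ} {η : X → U}

lemma sum_sum_mul_congr {f g : X → Y → ℝ} (h : ∀ x y, μ x y ≠ 0 → f x y = g x y) :
    ∑ x, ∑ y, μ x y * f x y = ∑ x, ∑ y, μ x y * g x y := by
  refine Finset.sum_congr rfl fun x _ => Finset.sum_congr rfl fun y _ => ?_
  by_cases hxy : μ x y = 0
  · rw [hxy, zero_mul, zero_mul]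
  · rw [h x y hxy]

lemma sum_sum_mul_add_comp [Fintype U] (μ : X → Y → ℝ) (η : X → U) (a : X → ℝ)
    (b : U → Y → ℝ) :
    ∑ x, ∑ y, μ x y * (a x + b (η x) y) =
      ∑ x, margX μ x * a x + ∑ u, ∑ y, margYU μ η y u * b u y := by
  simp only [mul_add, Finset.sum_add_distrib, ← Finset.sum_mul, margX]
  congr 1
  rw [← Finset.sum_fiberwise Finset.univ η]
  refine Finset.sum_congr rfl fun u _ => ?_
  rw [Finset.sum_comm]
  refine Finset.sum_congr rfl fun y _ => ?_
  rw [margYU, ← Finset.sum_filter, Finset.sum_mul]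
  exact Finset.sum_congr rfl fun x hx => by rw [(Finset.mem_filter.1 hx).2]

variable (hν : ∀ x y, 0 ≤ ν x y) (hci : CondIndep ν η) (hac : ∀ x y, ν x y = 0 → μ x y = 0)
include hν hci hac

lemma log_condIndepProj_div {x : X} {y : Y} (h : condIndepProj μ η x y ≠ 0) :
    log (condIndepProj μ η x y / ν x y) = log (margX μ x / margX ν x) +
      log (margYU μ η y (η x) * margU ν η (η x) / (margU μ η (η x) * margYU ν η y (η x))) := by
  simp only [condIndepProj, ne_eq, mul_eq_zero, div_eq_zero_iff, not_or] at h
  obtain ⟨hX, hYU, hU⟩ := h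
  have hX' := mt (margX_eq_zero_of_absCont hν hac) hX
  have hYU' := mt (margYU_eq_zero_of_absCont hν hac) hYU
  have hU' := mt (margU_eq_zero_of_absCont hν hac) hU
  conv_lhs => rw [← hci.condIndepProj_eq hν]
  rw [← log_mul (by positivity) (by positivity)]
  congr 1
  simp only [condIndepProj, div_eq_mul_inv, mul_inv, inv_inv]
  ring

theorem KL_eq_KL_condIndepProj_add [Fintype U] (hμ : ∀ x y, 0 ≤ μ x y) :
    KL μ ν = KL μ (condIndepProj μ η) + KL (condIndepProj μ η) ν := by
  set a : X → ℝ := fun x => log (margX μ x / margX ν x)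
  set b : U → Y → ℝ := fun u y =>
    log (margYU μ η y u * margU ν η u / (margU μ η u * margYU ν η y u))
  have hproj : KL (condIndepProj μ η) ν =
      ∑ x, ∑ y, condIndepProj μ η x y * (a x + b (η x) y) :=
    sum_sum_mul_congr fun x y h => log_condIndepProj_div hν hci hac h
  have hμν : KL μ ν - KL μ (condIndepProj μ η) = ∑ x, ∑ y, μ x y * (a x + b (η x) y) := by
    simp only [KL, ← Finset.sum_sub_distrib, ← mul_sub]
    refine sum_sum_mul_congr fun x y h => ?_
    have h' : condIndepProj μ η x y ≠ 0 := mt (eq_zero_of_condIndepProj_eq_zero hμ) h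
    rw [← log_condIndepProj_div hν hci hac h', log_div h (mt (hac x y) h),
      log_div h h', log_div h' (mt (hac x y) h)]
    ring
  rw [← sub_eq_iff_eq_add', hμν, hproj, sum_sum_mul_add_comp, sum_sum_mul_add_comp]
  simp only [margX_condIndepProj hμ, margYU_condIndepProj hμ]

end Divergence

theorem KL_nonneg {X Y : Type*} [Fintype X] [Fintype Y] {μ ν : X → Y → ℝ} (hμ : IsDist μ)
    (hν : IsDist ν) (hac : ∀ x y, ν x y = 0 → μ x y = 0) : 0 ≤ KL μ ν := by
  calc (0 : ℝ) = ∑ x, ∑ y, (μ x y - ν x y) := by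
        simp only [Finset.sum_sub_distrib, hμ.2, hν.2, sub_self]
    _ ≤ KL μ ν := Finset.sum_le_sum fun x _ => Finset.sum_le_sum fun y _ =>
        sub_le_mul_log_div (hμ.1 x y) (hν.1 x y)
          fun h => (hν.1 x y).lt_of_ne' (mt (hac x y) h)

/-- information-projection identity. The minimum of `D(μ‖μ̃)` over
distributions `μ̃` under which `X ⟂ Y | η(X)` equals `I(X;Y|U)`, attained at
`μ̃*(x,y) = μ_X(x) · μ_{Y|U}(y|η(x))`. -/
theorem stmt8 {X Y U : Type*} [Fintype X] [Fintype Y] [Fintype U] [DecidableEq U]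
    (μ : X → Y → ℝ) (η : X → U) (hμ : IsDist μ) :
    let μstar : X → Y → ℝ :=
      fun x y => margX μ x * (margYU μ η y (η x) / margU μ η (η x))
    IsDist μstar ∧ CondIndep μstar η ∧ KL μ μstar = condMI μ η ∧
      ∀ ν : X → Y → ℝ, IsDist ν → CondIndep ν η →
        (∀ x y, ν x y = 0 → μ x y = 0) → condMI μ η ≤ KL μ ν := by
  intro μstar
  refine ⟨isDist_condIndepProj hμ, condIndep_condIndepProj hμ.1, KL_condIndepProj μ η,
    fun ν hν hci hac => ?_⟩
  have hproj_ac : ∀ x y, ν x y = 0 → μstar x y = 0 := by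
    rw [← hci.condIndepProj_eq hν.1]
    exact condIndepProj_absCont hν.1 hac
  rw [KL_eq_KL_condIndepProj_add hν.1 hci hac hμ.1, KL_condIndepProj]
  exact le_add_of_nonneg_right (KL_nonneg (isDist_condIndepProj hμ) hν hproj_ac)
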